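/- arXiv:2304.06791 — 2 statements merged into one kernel-verified Lean document; each statement's English description precedes it below -/
import Mathlib

section
/- Let H ∈ k⟦X⟧ and let s ≥ 1 be a natural number. (a) If Φ₁ and Φ₂ both have order 1 and satisfy H∘Φ₁ ≡ Φ₁′·H mod X^{s+1} and H∘Φ₂ ≡ Φ₂′·H mod X^{s+1}, then H∘(Φ₁∘Φ₂) ≡ (Φ₁∘Φ₂)′·H mod X^{s+1}. (b) If Φ has order 1, satisfies H∘Φ ≡ Φ′·H mod X^{s+1}, and Ψ ∈ k⟦X⟧ is the compositional inverse of Φ (Φ∘Ψ = X = Ψ∘Φ), then H∘Ψ ≡ Ψ′·H mod X^{s+1}. -/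
open PowerSeries

variable {k : Type*} [Field k] [CharZero k]

/-- Substitution of `g` (with zero constant coefficient) into `f`. -/
noncomputable def comp (f g : PowerSeries k) : PowerSeries k :=
  PowerSeries.mk fun m => ∑ n ∈ Finset.range (m + 1),
    PowerSeries.coeff n f * PowerSeries.coeff m (g ^ n)

/-!
An order-1 series `Φ` solves the truncated Aczél–Jabotinsky equation exactly when its defect
`H ∘ Φ - Φ' · H` vanishes modulo `X^(s+1)`. By associativity of substitution and the chain rule
the defect `D` is a cocycle: `D(Φ₁ ∘ Φ₂) = D(Φ₁) ∘ Φ₂ + (Φ₁' ∘ Φ₂) · D(Φ₂)`.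
Substituting a series without constant term preserves divisibility by `X^(s+1)`, which gives
closure under composition. Applied to `Φ ∘ Ψ = X`, whose defect is zero, and combined with
`(Φ' ∘ Ψ) · Ψ' = 1`, the cocycle identity yields `D(Ψ) = -Ψ' · (D(Φ) ∘ Ψ)`.
-/

section Defect

variable {R : Type*} [CommRing R]

theorem X_pow_dvd_subst {n : ℕ} {f g : R⟦X⟧} (hg : constantCoeff g = 0) (hf : X ^ n ∣ f) :
    X ^ n ∣ f.subst g := by
  obtain ⟨q, rfl⟩ := hf
  have hg' : HasSubst g := HasSubst.of_constantCoeff_zero' hg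
  rw [subst_mul hg', subst_pow hg', subst_X hg']
  exact (pow_dvd_pow_of_dvd (X_dvd_iff.2 hg) n).mul_right _

noncomputable def aczelJabotinskyDefect (H Φ : R⟦X⟧) : R⟦X⟧ :=
  H.subst Φ - d⁄dX R Φ * H

theorem aczelJabotinskyDefect_X (H : R⟦X⟧) : aczelJabotinskyDefect H X = 0 := by
  simp [aczelJabotinskyDefect, X_subst]

theorem aczelJabotinskyDefect_subst (H : R⟦X⟧) {Φ₁ Φ₂ : R⟦X⟧} (h₁ : HasSubst Φ₁)
    (h₂ : HasSubst Φ₂) :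
    aczelJabotinskyDefect H (Φ₁.subst Φ₂) =
      (aczelJabotinskyDefect H Φ₁).subst Φ₂ +
        (d⁄dX R Φ₁).subst Φ₂ * aczelJabotinskyDefect H Φ₂ := by
  simp only [aczelJabotinskyDefect, derivative_subst h₂, subst_sub h₂, subst_mul h₂,
    ← subst_comp_subst_apply h₁ h₂]
  ring

theorem X_pow_dvd_aczelJabotinskyDefect_subst {n : ℕ} {H Φ₁ Φ₂ : R⟦X⟧}
    (h₁ : constantCoeff Φ₁ = 0) (h₂ : constantCoeff Φ₂ = 0)
    (hΦ₁ : X ^ n ∣ aczelJabotinskyDefect H Φ₁) (hΦ₂ : X ^ n ∣ aczelJabotinskyDefect H Φ₂) :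
    X ^ n ∣ aczelJabotinskyDefect H (Φ₁.subst Φ₂) := by
  rw [aczelJabotinskyDefect_subst H (.of_constantCoeff_zero' h₁) (.of_constantCoeff_zero' h₂)]
  exact dvd_add (X_pow_dvd_subst h₂ hΦ₁) (hΦ₂.mul_left _)

theorem X_pow_dvd_aczelJabotinskyDefect_of_subst_eq_X {n : ℕ} {H Φ Ψ : R⟦X⟧}
    (hΦ : constantCoeff Φ = 0) (hΨ : constantCoeff Ψ = 0) (hΦΨ : Φ.subst Ψ = X)
    (hD : X ^ n ∣ aczelJabotinskyDefect H Φ) :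
    X ^ n ∣ aczelJabotinskyDefect H Ψ := by
  have hΦ' : HasSubst Φ := .of_constantCoeff_zero' hΦ
  have hΨ' : HasSubst Ψ := .of_constantCoeff_zero' hΨ
  have hchain : (d⁄dX R Φ).subst Ψ * d⁄dX R Ψ = 1 := by
    rw [← derivative_subst hΨ', hΦΨ, derivative_X]
  have hcocycle := aczelJabotinskyDefect_subst H hΦ' hΨ'
  rw [hΦΨ, aczelJabotinskyDefect_X] at hcocycle
  have hdefect :
      aczelJabotinskyDefect H Ψ = -(d⁄dX R Ψ * (aczelJabotinskyDefect H Φ).subst Ψ) := by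
    linear_combination (-d⁄dX R Ψ) * hcocycle - aczelJabotinskyDefect H Ψ * hchain
  rw [hdefect]
  exact ((X_pow_dvd_subst hΨ hD).mul_left _).neg_right

end Defect

section Comp

variable {K : Type*} [Field K]

theorem constantCoeff_comp (f g : K⟦X⟧) : constantCoeff (comp f g) = constantCoeff f := by
  rw [← coeff_zero_eq_constantCoeff_apply, comp, coeff_mk]
  simp

theorem comp_eq_subst (f : K⟦X⟧) {g : K⟦X⟧} (hg : constantCoeff g = 0) :
    comp f g = f.subst g := by
  ext m
  rw [comp, coeff_mk, coeff_subst' (.of_constantCoeff_zero' hg)]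
  refine (finsum_eq_sum_of_support_subset _ fun d hd => ?_).symm
  rw [Function.mem_support] at hd
  rw [Finset.coe_range, Set.mem_Iio]
  by_contra! hmd
  have hX_dvd : X ^ d ∣ g ^ d := pow_dvd_pow_of_dvd (X_dvd_iff.2 hg) d
  exact hd (by rw [X_pow_dvd_iff.1 hX_dvd m (by omega), mul_zero])

theorem comp_sub_derivativeFun_mul (H : K⟦X⟧) {Φ : K⟦X⟧} (hΦ : constantCoeff Φ = 0) :
    comp H Φ - derivativeFun Φ * H = aczelJabotinskyDefect H Φ := by
  rw [comp_eq_subst H hΦ]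
  rfl

end Comp

theorem aczel_jabotinsky_truncated_solutions_group_general (H : PowerSeries k)
    (s : ℕ) :
    (∀ Φ₁ Φ₂ : PowerSeries k,
      constantCoeff Φ₁ = 0 → coeff 1 Φ₁ ≠ 0 →
      constantCoeff Φ₂ = 0 → coeff 1 Φ₂ ≠ 0 →
      (X : PowerSeries k) ^ (s + 1) ∣ comp H Φ₁ - derivativeFun Φ₁ * H →
      (X : PowerSeries k) ^ (s + 1) ∣ comp H Φ₂ - derivativeFun Φ₂ * H →
      (X : PowerSeries k) ^ (s + 1) ∣
        comp H (comp Φ₁ Φ₂) - derivativeFun (comp Φ₁ Φ₂) * H) ∧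
    (∀ Φ Ψ : PowerSeries k,
      constantCoeff Φ = 0 → coeff 1 Φ ≠ 0 →
      (X : PowerSeries k) ^ (s + 1) ∣ comp H Φ - derivativeFun Φ * H →
      comp Φ Ψ = X → comp Ψ Φ = X →
      (X : PowerSeries k) ^ (s + 1) ∣ comp H Ψ - derivativeFun Ψ * H) := by
  constructor
  · intro Φ₁ Φ₂ h₁ _ h₂ _ hD₁ hD₂
    have h₁₂ : constantCoeff (comp Φ₁ Φ₂) = 0 := (constantCoeff_comp Φ₁ Φ₂).trans h₁
    rw [comp_sub_derivativeFun_mul H h₁] at hD₁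
    rw [comp_sub_derivativeFun_mul H h₂] at hD₂
    rw [comp_sub_derivativeFun_mul H h₁₂, comp_eq_subst Φ₁ h₂]
    exact X_pow_dvd_aczelJabotinskyDefect_subst h₁ h₂ hD₁ hD₂
  · intro Φ Ψ hΦ _ hD hΦΨ hΨΦ
    have hΨ : constantCoeff Ψ = 0 := by
      rw [← constantCoeff_comp Ψ Φ, hΨΦ, constantCoeff_X]
    rw [comp_sub_derivativeFun_mul H hΦ] at hD
    rw [comp_eq_subst Φ hΨ] at hΦΨ
    rw [comp_sub_derivativeFun_mul H hΨ]
    exact X_pow_dvd_aczelJabotinskyDefect_of_subst_eq_X hΦ hΨ hΦΨ hD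

/-- Order-1 solutions of the truncated Aczél–Jabotinsky equation
`H ∘ Φ ≡ Φ′ · H mod X^(s+1)` are closed under substitution and under
compositional inverses. -/
theorem aczel_jabotinsky_truncated_solutions_group (H : PowerSeries k)
    (s : ℕ) (hs : 1 ≤ s) :
    (∀ Φ₁ Φ₂ : PowerSeries k,
      constantCoeff Φ₁ = 0 → coeff 1 Φ₁ ≠ 0 →
      constantCoeff Φ₂ = 0 → coeff 1 Φ₂ ≠ 0 →
      (X : PowerSeries k) ^ (s + 1) ∣ comp H Φ₁ - derivativeFun Φ₁ * H →
      (X : PowerSeries k) ^ (s + 1) ∣ comp H Φ₂ - derivativeFun Φ₂ * H →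
      (X : PowerSeries k) ^ (s + 1) ∣
        comp H (comp Φ₁ Φ₂) - derivativeFun (comp Φ₁ Φ₂) * H) ∧
    (∀ Φ Ψ : PowerSeries k,
      constantCoeff Φ = 0 → coeff 1 Φ ≠ 0 →
      (X : PowerSeries k) ^ (s + 1) ∣ comp H Φ - derivativeFun Φ * H →
      comp Φ Ψ = X → comp Ψ Φ = X →
      (X : PowerSeries k) ^ (s + 1) ∣ comp H Ψ - derivativeFun Ψ * H) :=
  aczel_jabotinsky_truncated_solutions_group_general H s
end

section
/- Let l ≥ 1 and let s ≥ 2l+1 be a natural number, let δ ∈ k, and set H̃ = X^{l+1} + δ·X^{2l+1}. Then for every c₁ ∈ k with c₁^l = 1, every c_{l+1} ∈ k, and every choice of c_{s−l+1}, …, c_s ∈ k, there exist unique values c_j ∈ k for the remaining indices j ∈ {2, …, s} \ ({l+1} ∪ {s−l+1, …, s}) such that the power series Φ = c₁·X + Σ_{j=2}^{s} c_j X^j satisfies H̃∘Φ ≡ Φ′·H̃ mod X^{s+1}. Moreover, every Φ of order 1 satisfying H̃∘Φ ≡ Φ′·H̃ mod X^{s+1} has (coefficient of X in Φ)^l = 1.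 -/
/-!
Write `E φ = φ^(l+1) + δ φ^(2l+1) - φ' H̃`; it equals `H̃ ∘ φ - φ' H̃` when `φ(0) = 0`.
Its coefficients below `X^(l+1)` vanish, its `X^(l+1)`-coefficient is `c₁^(l+1) - c₁`, and for
`j ≥ 2` its `X^(l+j)`-coefficient depends only on `c₁, …, c_j`, affinely in `c_j` with slope
`(l+1) c₁^l - j`, which is `l + 1 - j` once `c₁^l = 1`. Hence the congruence mod `X^(s+1)` is a
triangular system determining `c_j` for `2 ≤ j ≤ s - l`, except at the resonant index `j = l + 1`.
There the equation holds automatically: the equations for `j ≤ l` force `c₂ = ⋯ = c_l = 0`, and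
`c₁ X` is an exact solution.
-/

open PowerSeries

variable {k : Type*} [Field k] [CharZero k]

/-- The normal form generator. -/
noncomputable def Htilde (l : ℕ) (δ : k) : PowerSeries k :=
  X ^ (l + 1) + C δ * X ^ (2 * l + 1)

theorem pow_succ_sub_pow_succ {R : Type*} [CommRing R] (x y : R) (n : ℕ) :
    x ^ (n + 1) - y ^ (n + 1) = (∑ i ∈ Finset.range (n + 1), x ^ i * y ^ (n - i)) * (x - y) := by
  simpa using (geom_sum₂_mul x y (n + 1)).symm

namespace PowerSeries

variable {R : Type*} [CommRing R] {φ ψ : R⟦X⟧}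

theorem coeff_add_mul_of_X_pow_dvd {f g : R⟦X⟧} {p q : ℕ} (hf : X ^ p ∣ f) (hg : X ^ q ∣ g) :
    coeff (p + q) (f * g) = coeff p f * coeff q g := by
  obtain ⟨f, rfl⟩ := hf
  obtain ⟨g, rfl⟩ := hg
  rw [mul_mul_mul_comm, ← pow_add]
  simp only [coeff_X_pow_mul', le_refl, if_true, Nat.sub_self, coeff_zero_eq_constantCoeff_apply,
    map_mul]

theorem coeff_pow_self_of_X_dvd (hφ : X ∣ φ) (n : ℕ) : coeff n (φ ^ n) = coeff 1 φ ^ n := by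
  obtain ⟨φ, rfl⟩ := hφ
  rw [mul_pow, coeff_X_pow_mul', if_pos le_rfl, Nat.sub_self, coeff_zero_eq_constantCoeff_apply,
    map_pow, ← coeff_zero_eq_constantCoeff_apply, ← coeff_succ_X_mul]

theorem X_pow_dvd_sub_iff {j : ℕ} : X ^ j ∣ φ - ψ ↔ ∀ i < j, coeff i φ = coeff i ψ := by
  simp only [X_pow_dvd_iff, map_sub, sub_eq_zero]

theorem X_pow_dvd_derivative {f : R⟦X⟧} {n : ℕ} (h : X ^ (n + 1) ∣ f) : X ^ n ∣ d⁄dX R f := by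
  rw [X_pow_dvd_iff] at h ⊢
  intro m hm
  rw [coeff_derivative, h (m + 1) (by omega), zero_mul]

theorem X_pow_dvd_geom_sum₂ (hφ : X ∣ φ) (hψ : X ∣ ψ) (n : ℕ) :
    X ^ n ∣ ∑ i ∈ Finset.range (n + 1), φ ^ i * ψ ^ (n - i) := by
  refine Finset.dvd_sum fun i hi => ?_
  rw [← Nat.add_sub_cancel' (Finset.mem_range_succ_iff.1 hi), pow_add, Nat.add_sub_cancel_left]
  exact mul_dvd_mul (pow_dvd_pow_of_dvd hφ i) (pow_dvd_pow_of_dvd hψ _)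

theorem coeff_geom_sum₂ (hφ : X ∣ φ) (hψ : X ∣ ψ) (h₁ : coeff 1 φ = coeff 1 ψ) (n : ℕ) :
    coeff n (∑ i ∈ Finset.range (n + 1), φ ^ i * ψ ^ (n - i)) = (n + 1) * coeff 1 ψ ^ n := by
  have hterm : ∀ i ∈ Finset.range (n + 1), coeff n (φ ^ i * ψ ^ (n - i)) = coeff 1 ψ ^ n := by
    intro i hi
    have hin := Finset.mem_range_succ_iff.1 hi
    have := coeff_add_mul_of_X_pow_dvd (pow_dvd_pow_of_dvd hφ i) (pow_dvd_pow_of_dvd hψ (n - i))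
    rw [Nat.add_sub_cancel' hin] at this
    rw [this, coeff_pow_self_of_X_dvd hφ, coeff_pow_self_of_X_dvd hψ, h₁, ← pow_add,
      Nat.add_sub_cancel' hin]
  rw [map_sum, Finset.sum_congr rfl hterm, Finset.sum_const, Finset.card_range, nsmul_eq_mul]
  push_cast
  ring

theorem X_pow_add_dvd_pow_succ_sub_pow_succ (hφ : X ∣ φ) (hψ : X ∣ ψ) {j : ℕ}
    (h : X ^ j ∣ φ - ψ) (n : ℕ) : X ^ (n + j) ∣ φ ^ (n + 1) - ψ ^ (n + 1) := by
  rw [pow_succ_sub_pow_succ, pow_add]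
  exact mul_dvd_mul (X_pow_dvd_geom_sum₂ hφ hψ n) h

theorem coeff_pow_succ_sub_pow_succ (hφ : X ∣ φ) (hψ : X ∣ ψ) {j : ℕ} (hj : 2 ≤ j)
    (h : X ^ j ∣ φ - ψ) (n : ℕ) :
    coeff (n + j) (φ ^ (n + 1) - ψ ^ (n + 1)) =
      (n + 1) * coeff 1 ψ ^ n * (coeff j φ - coeff j ψ) := by
  have h₁ : coeff 1 φ = coeff 1 ψ :=
    sub_eq_zero.1 (by rw [← map_sub]; exact X_pow_dvd_iff.1 h 1 (by omega))
  rw [pow_succ_sub_pow_succ, coeff_add_mul_of_X_pow_dvd (X_pow_dvd_geom_sum₂ hφ hψ n) h,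
    coeff_geom_sum₂ hφ hψ h₁, map_sub]

end PowerSeries

section Triangular

variable {R : Type*} [DivisionRing R] {free : ℕ → Prop} {v : ℕ → R} {e : R⟦X⟧ → ℕ → R}
  {a : ℕ → R}

-- The slope `a j` may depend on the free data `v`, so the affine law is only required when `ψ`
-- carries that data below `j`.
structure IsTriangular (free : ℕ → Prop) (v : ℕ → R) (e : R⟦X⟧ → ℕ → R) (a : ℕ → R) : Prop where
  diag_ne_zero : ∀ j, ¬ free j → a j ≠ 0
  apply_eq : ∀ j, ¬ free j → ∀ φ ψ : R⟦X⟧, (∀ i < j, coeff i φ = coeff i ψ) →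
    (∀ i < j, free i → coeff i ψ = v i) → e φ j = e ψ j + a j * (coeff j φ - coeff j ψ)

open Classical in
noncomputable def triangularSolution (free : ℕ → Prop) (v : ℕ → R) (e : R⟦X⟧ → ℕ → R)
    (a : ℕ → R) : ℕ → R
  | j => if free j then v j else
      -(a j)⁻¹ * e (mk fun i => if i < j then triangularSolution free v e a i else 0) j

theorem triangularSolution_of_free {j : ℕ} (h : free j) :
    triangularSolution free v e a j = v j := by
  rw [triangularSolution, if_pos h]

theorem triangularSolution_of_not_free {j : ℕ} (h : ¬ free j) :
    triangularSolution free v e a j =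
      -(a j)⁻¹ * e (mk fun i => if i < j then triangularSolution free v e a i else 0) j := by
  rw [triangularSolution, if_neg h]

namespace IsTriangular

theorem coeff_eq_coeff (hT : IsTriangular free v e a) {φ ψ : R⟦X⟧} {J : ℕ}
    (hφ : ∀ i < J, free i → coeff i φ = v i) (hψ : ∀ i < J, free i → coeff i ψ = v i)
    (hφe : ∀ i < J, ¬ free i → e φ i = 0) (hψe : ∀ i < J, ¬ free i → e ψ i = 0)
    (i : ℕ) (hi : i < J) :
    coeff i φ = coeff i ψ := by
  induction i using Nat.strong_induction_on with
  | _ i ih =>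
    by_cases hfree : free i
    · rw [hφ i hi hfree, hψ i hi hfree]
    · have hlin := hT.apply_eq i hfree φ ψ (fun m hm => ih m hm (hm.trans hi))
        (fun m hm => hψ m (hm.trans hi))
      rw [hφe i hi hfree, hψe i hi hfree, zero_add, eq_comm, mul_eq_zero] at hlin
      exact sub_eq_zero.1 (hlin.resolve_left (hT.diag_ne_zero i hfree))

theorem apply_mk_triangularSolution (hT : IsTriangular free v e a) {j : ℕ} (hj : ¬ free j) :
    e (PowerSeries.mk (triangularSolution free v e a)) j = 0 := by
  rw [hT.apply_eq j hj _
      (PowerSeries.mk fun i => if i < j then triangularSolution free v e a i else 0)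
      (fun i hi => by rw [coeff_mk, coeff_mk, if_pos hi])
      (fun i hi hfree => by rw [coeff_mk, if_pos hi, triangularSolution_of_free hfree]),
    coeff_mk, coeff_mk, if_neg (lt_irrefl j), sub_zero, triangularSolution_of_not_free hj,
    neg_mul, mul_neg, mul_inv_cancel_left₀ (hT.diag_ne_zero j hj), add_neg_cancel]

theorem existsUnique (hT : IsTriangular free v e a) :
    ∃! φ : R⟦X⟧, (∀ j, free j → coeff j φ = v j) ∧ ∀ j, ¬ free j → e φ j = 0 := by
  refine ⟨PowerSeries.mk (triangularSolution free v e a),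
    ⟨fun j hj => by rw [coeff_mk, triangularSolution_of_free hj],
      fun j hj => hT.apply_mk_triangularSolution hj⟩, ?_⟩
  rintro ψ ⟨hψ, hψe⟩
  ext j
  exact hT.coeff_eq_coeff (fun i _ => hψ i)
    (fun i _ hi => by rw [coeff_mk, triangularSolution_of_free hi]) (fun i _ => hψe i)
    (fun i _ hi => hT.apply_mk_triangularSolution hi) j (lt_add_one j)

end IsTriangular

end Triangular

section Comp

theorem coeff_comp (f g : k⟦X⟧) (m : ℕ) :
    coeff m (comp f g) = ∑ n ∈ Finset.range (m + 1), coeff n f * coeff m (g ^ n) :=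
  coeff_mk _ _

theorem comp_add (f₁ f₂ g : k⟦X⟧) : comp (f₁ + f₂) g = comp f₁ g + comp f₂ g := by
  ext m
  simp only [coeff_comp, map_add, add_mul, Finset.sum_add_distrib]

theorem comp_C_mul (r : k) (f g : k⟦X⟧) : comp (C r * f) g = C r * comp f g := by
  ext m
  simp only [coeff_comp, coeff_C_mul, Finset.mul_sum, mul_assoc]

theorem comp_X_pow {g : k⟦X⟧} (hg : constantCoeff g = 0) (n : ℕ) : comp (X ^ n) g = g ^ n := by
  ext m
  simp only [coeff_comp, coeff_X_pow, ite_mul, one_mul, zero_mul, Finset.sum_ite_eq',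
    Finset.mem_range_succ_iff]
  split_ifs with hn
  · rfl
  · exact (X_pow_dvd_iff.1 (pow_dvd_pow_of_dvd (X_dvd_iff.2 hg) n) m (by omega)).symm

end Comp

namespace AczelJabotinsky

variable {l : ℕ} {δ : k} {φ ψ : k⟦X⟧}

variable (l δ) in
/-- The Aczél–Jabotinsky defect `H̃ ∘ φ - φ' H̃`, written out for `φ` without constant term. -/
noncomputable def defect (φ : k⟦X⟧) : k⟦X⟧ :=
  φ ^ (l + 1) + C δ * φ ^ (2 * l + 1) - d⁄dX k φ * Htilde l δ

theorem comp_Htilde_sub_eq_defect (hφ : constantCoeff φ = 0) :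
    comp (Htilde l δ) φ - d⁄dX k φ * Htilde l δ = defect l δ φ := by
  rw [Htilde, comp_add, comp_C_mul, comp_X_pow hφ, comp_X_pow hφ, defect, Htilde]

theorem X_pow_dvd_Htilde : X ^ (l + 1) ∣ Htilde l δ :=
  ⟨1 + C δ * X ^ l, by rw [Htilde]; ring⟩

theorem coeff_Htilde_succ (hl : 1 ≤ l) : coeff (l + 1) (Htilde l δ) = 1 := by
  rw [Htilde, map_add, coeff_C_mul, coeff_X_pow_self, coeff_X_pow, if_neg (by omega), mul_zero,
    add_zero]

theorem X_pow_dvd_defect (hφ : X ∣ φ) : X ^ (l + 1) ∣ defect l δ φ := by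
  refine dvd_sub (dvd_add (pow_dvd_pow_of_dvd hφ _) (dvd_mul_of_dvd_right ?_ _))
    (dvd_mul_of_dvd_right X_pow_dvd_Htilde _)
  exact (pow_dvd_pow X (by omega)).trans (pow_dvd_pow_of_dvd hφ _)

theorem coeff_defect_succ (hl : 1 ≤ l) (hφ : X ∣ φ) :
    coeff (l + 1) (defect l δ φ) = coeff 1 φ ^ (l + 1) - coeff 1 φ := by
  have hhigh : coeff (l + 1) (φ ^ (2 * l + 1)) = 0 :=
    X_pow_dvd_iff.1 (pow_dvd_pow_of_dvd hφ _) _ (by omega)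
  have hder : coeff (0 + (l + 1)) (d⁄dX k φ * Htilde l δ) = coeff 1 φ := by
    rw [coeff_add_mul_of_X_pow_dvd (by rw [pow_zero]; exact one_dvd _) X_pow_dvd_Htilde,
      coeff_Htilde_succ hl, coeff_derivative]
    simp
  rw [zero_add] at hder
  rw [defect, map_sub, map_add, coeff_C_mul, coeff_pow_self_of_X_dvd hφ, hhigh, hder, mul_zero,
    add_zero]

theorem defect_C_mul_X {c : k} (hc : c ^ l = 1) : defect l δ (C c * X) = 0 := by
  have hc₁ : c ^ (l + 1) = c := by rw [pow_succ, hc, one_mul]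
  have hc₂ : c ^ (2 * l + 1) = c := by rw [pow_succ, pow_mul', hc, one_pow, one_mul]
  rw [defect, Derivation.leibniz, derivative_C, derivative_X, smul_zero, add_zero, smul_eq_mul,
    mul_one, mul_pow, mul_pow, ← map_pow, ← map_pow, hc₁, hc₂, Htilde]
  ring

theorem coeff_defect_of_X_pow_dvd_sub (hl : 1 ≤ l) {j : ℕ} (hj : 2 ≤ j) (hψ : X ∣ ψ)
    (h : X ^ j ∣ φ - ψ) :
    coeff (l + j) (defect l δ φ) = coeff (l + j) (defect l δ ψ) +
      ((l + 1) * coeff 1 ψ ^ l - j) * (coeff j φ - coeff j ψ) := by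
  have hφ : X ∣ φ := by
    simpa using dvd_add ((dvd_pow_self X (by omega : j ≠ 0)).trans h) hψ
  have hsplit : defect l δ φ - defect l δ ψ = (φ ^ (l + 1) - ψ ^ (l + 1)) +
      C δ * (φ ^ (2 * l + 1) - ψ ^ (2 * l + 1)) - d⁄dX k (φ - ψ) * Htilde l δ := by
    rw [defect, defect, map_sub]
    ring
  have hpow : coeff (l + j) (φ ^ (l + 1) - ψ ^ (l + 1)) =
      (l + 1) * coeff 1 ψ ^ l * (coeff j φ - coeff j ψ) :=
    coeff_pow_succ_sub_pow_succ hφ hψ hj h l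
  have hpow' : coeff (l + j) (φ ^ (2 * l + 1) - ψ ^ (2 * l + 1)) = 0 :=
    X_pow_dvd_iff.1 (X_pow_add_dvd_pow_succ_sub_pow_succ hφ hψ h (2 * l)) _ (by omega)
  have hder : coeff (l + j) (d⁄dX k (φ - ψ) * Htilde l δ) = j * (coeff j φ - coeff j ψ) := by
    obtain ⟨i, rfl⟩ : ∃ i, j = i + 1 := ⟨j - 1, by omega⟩
    rw [show l + (i + 1) = i + (l + 1) by ring,
      coeff_add_mul_of_X_pow_dvd (X_pow_dvd_derivative h) X_pow_dvd_Htilde, coeff_Htilde_succ hl,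
      coeff_derivative, map_sub]
    push_cast
    ring
  have := congrArg (coeff (l + j)) hsplit
  rw [map_sub, map_sub, map_add, coeff_C_mul, hpow, hpow', hder] at this
  linear_combination this

theorem coeff_defect_add_succ_eq_zero (hl : 1 ≤ l) {c : k} (hc : c ^ l = 1)
    (hφ : X ^ (l + 1) ∣ φ - C c * X) : coeff (l + (l + 1)) (defect l δ φ) = 0 := by
  rw [coeff_defect_of_X_pow_dvd_sub hl (by omega) (dvd_mul_left X _) hφ, defect_C_mul_X hc,
    map_zero, coeff_C_mul, coeff_one_X, mul_one, hc]
  push_cast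
  ring

def IsFreeIndex (l s j : ℕ) : Prop := j ≤ 1 ∨ j = l + 1 ∨ s - l < j

def prescribed (l s : ℕ) (c₁ clp : k) (ctail : ℕ → k) (j : ℕ) : k :=
  if j = 0 then 0 else if j = 1 then c₁ else if j = l + 1 then clp else if j ≤ s then ctail j
  else 0

variable {s : ℕ} {c₁ clp : k} {ctail : ℕ → k}

theorem prescribed_iff (hl : 1 ≤ l) (hs : 2 * l + 1 ≤ s) :
    (∀ j, IsFreeIndex l s j → coeff j φ = prescribed l s c₁ clp ctail j) ↔
      constantCoeff φ = 0 ∧ coeff 1 φ = c₁ ∧ coeff (l + 1) φ = clp ∧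
        (∀ j, s - l + 1 ≤ j → j ≤ s → coeff j φ = ctail j) ∧ ∀ j, s < j → coeff j φ = 0 := by
  constructor
  · intro h
    refine ⟨?_, ?_, ?_, fun j hj hjs => ?_, fun j hj => ?_⟩
    · simpa [prescribed] using h 0 (Or.inl (Nat.zero_le 1))
    · simpa [prescribed] using h 1 (Or.inl le_rfl)
    · rw [h (l + 1) (Or.inr (Or.inl rfl)), prescribed, if_neg (by omega), if_neg (by omega),
        if_pos rfl]
    · rw [h j (Or.inr (Or.inr (by omega))), prescribed, if_neg (by omega), if_neg (by omega),
        if_neg (by omega), if_pos hjs]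
    · rw [h j (Or.inr (Or.inr (by omega))), prescribed, if_neg (by omega), if_neg (by omega),
        if_neg (by omega), if_neg (by omega)]
  · rintro ⟨h0, h1, hlp, htail, hhigh⟩ j hj
    unfold IsFreeIndex at hj
    unfold prescribed
    split_ifs with hj0 hj1 hjl hjs
    · rw [hj0, coeff_zero_eq_constantCoeff_apply, h0]
    · rw [hj1, h1]
    · rw [hjl, hlp]
    · exact htail j (by omega) hjs
    · exact hhigh j (by omega)

theorem isTriangular (hl : 1 ≤ l) (hc : c₁ ^ l = 1) :
    IsTriangular (IsFreeIndex l s) (prescribed l s c₁ clp ctail)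
      (fun φ j => coeff (l + j) (defect l δ φ)) (fun j => (l + 1 : k) - j) where
  diag_ne_zero j hj h := by
    refine hj (Or.inr (Or.inl ?_))
    exact_mod_cast (sub_eq_zero.1 h).symm
  apply_eq j hj φ ψ hagree hfixed := by
    unfold IsFreeIndex at hj
    have hψ0 : constantCoeff ψ = 0 := by
      simpa [prescribed] using hfixed 0 (by omega) (Or.inl (Nat.zero_le 1))
    have hψ1 : coeff 1 ψ = c₁ := by
      simpa [prescribed] using hfixed 1 (by omega) (Or.inl le_rfl)
    rw [coeff_defect_of_X_pow_dvd_sub hl (by omega) (X_dvd_iff.2 hψ0)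
      (X_pow_dvd_sub_iff.2 hagree), hψ1, hc, mul_one]

theorem X_pow_dvd_defect_iff (hl : 1 ≤ l) (hs : 2 * l + 1 ≤ s) (hc : c₁ ^ l = 1)
    (hfree : ∀ j, IsFreeIndex l s j → coeff j φ = prescribed l s c₁ clp ctail j) :
    X ^ (s + 1) ∣ defect l δ φ ↔
      ∀ j, ¬ IsFreeIndex l s j → coeff (l + j) (defect l δ φ) = 0 := by
  obtain ⟨hφ0, hφ1, -⟩ := (prescribed_iff hl hs).1 hfree
  rw [X_pow_dvd_iff]
  refine ⟨fun h j hj => h _ (by unfold IsFreeIndex at hj; omega), fun h m hm => ?_⟩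
  rcases le_or_gt m l with hml | hlm
  · exact X_pow_dvd_iff.1 (X_pow_dvd_defect (X_dvd_iff.2 hφ0)) m (by omega)
  obtain ⟨j, hj, rfl⟩ : ∃ j, 1 ≤ j ∧ m = l + j := ⟨m - l, by omega, by omega⟩
  by_cases hj1 : j = 1
  · rw [hj1, coeff_defect_succ hl (X_dvd_iff.2 hφ0), hφ1, pow_succ, hc, one_mul, sub_self]
  by_cases hjl : j = l + 1
  · subst hjl
    -- the equations for `j ≤ l` force `φ ≡ c₁ X mod X^(l+1)`
    refine coeff_defect_add_succ_eq_zero hl hc (X_pow_dvd_sub_iff.2 fun i hi =>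
      (isTriangular hl hc).coeff_eq_coeff (fun i _ hfi => hfree i hfi) (fun i hi hfi => ?_)
        (fun i hi hnf => h _ (by omega))
        (fun i _ _ => by rw [defect_C_mul_X hc, map_zero]) i hi)
    unfold IsFreeIndex at hfi
    obtain rfl | rfl : i = 0 ∨ i = 1 := by omega
    all_goals simp [prescribed, coeff_C_mul, coeff_X]
  · exact h j (by unfold IsFreeIndex; omega)

end AczelJabotinsky

open AczelJabotinsky

/-- For `H̃ = X^(l+1) + δX^(2l+1)` and `s ≥ 2l+1`: given `c₁` with `c₁^l = 1`,
a value for the coefficient of `X^(l+1)`, and values for the coefficients of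
`X^(s-l+1), …, X^s`, the remaining coefficients `c_j` (`2 ≤ j ≤ s`) are uniquely
determined so that `Φ = c₁X + Σ_{j=2}^s c_j X^j` solves the Aczél–Jabotinsky
equation mod `X^(s+1)`. Moreover every order-1 solution has `(coeff 1 Φ)^l = 1`. -/
theorem aczel_jabotinsky_truncated_normal_solutions (l s : ℕ)
    (hl : 1 ≤ l) (hs : 2 * l + 1 ≤ s) (δ : k) :
    (∀ c₁ : k, c₁ ^ l = 1 → ∀ clp : k, ∀ ctail : ℕ → k,
      ∃! Φ : PowerSeries k,
        constantCoeff Φ = 0 ∧ coeff 1 Φ = c₁ ∧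
        coeff (l + 1) Φ = clp ∧
        (∀ j, s - l + 1 ≤ j → j ≤ s → coeff j Φ = ctail j) ∧
        (∀ j, s < j → coeff j Φ = 0) ∧
        (X : PowerSeries k) ^ (s + 1) ∣
          comp (Htilde l δ) Φ - derivativeFun Φ * Htilde l δ) ∧
    (∀ Φ : PowerSeries k,
      constantCoeff Φ = 0 → coeff 1 Φ ≠ 0 →
      (X : PowerSeries k) ^ (s + 1) ∣
        comp (Htilde l δ) Φ - derivativeFun Φ * Htilde l δ →
      (coeff 1 Φ) ^ l = 1) := by
  have hdefect (φ : k⟦X⟧) (hφ : constantCoeff φ = 0) :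
      comp (Htilde l δ) φ - derivativeFun φ * Htilde l δ = defect l δ φ :=
    comp_Htilde_sub_eq_defect hφ
  refine ⟨fun c₁ hc clp ctail => ?_, fun φ h0 h1 hdvd => ?_⟩
  · refine (existsUnique_congr fun φ => ?_).1
      (isTriangular (s := s) (clp := clp) (ctail := ctail) (δ := δ) hl hc).existsUnique
    constructor
    · rintro ⟨hfree, heq⟩
      obtain ⟨h0, h1, hlp, htail, hhigh⟩ := (prescribed_iff hl hs).1 hfree
      exact ⟨h0, h1, hlp, htail, hhigh,
        hdefect φ h0 ▸ (X_pow_dvd_defect_iff hl hs hc hfree).2 heq⟩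
    · rintro ⟨h0, h1, hlp, htail, hhigh, hdvd⟩
      have hfree := (prescribed_iff hl hs).2 ⟨h0, h1, hlp, htail, hhigh⟩
      exact ⟨hfree, (X_pow_dvd_defect_iff hl hs hc hfree).1 (hdefect φ h0 ▸ hdvd)⟩
  · have hcoeff := X_pow_dvd_iff.1 (hdefect φ h0 ▸ hdvd) (l + 1) (by omega)
    rw [coeff_defect_succ hl (X_dvd_iff.2 h0), pow_succ, sub_eq_zero] at hcoeff
    exact mul_right_cancel₀ h1 (hcoeff.trans (one_mul _).symm)
end
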